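/- arXiv:1104.2206 — 2 statements merged into one kernel-verified Lean document; each statement's English description precedes it below -/
import Mathlib

section
/- For all p, q ∈ (0,1], r ∈ ℝ, and ε ∈ (0,1/4), the double integral ∫₀^p ∫₀^p (q² + |α - β + r|²)^(ε-1) dα dβ is at most 6p / q^(1-ε). -/
/-!
Substituting `x = α - β + r`, each inner integral is at most `∫ (q² + x²)^(ε-1) dx` over the
whole line, and scaling `x = q t` turns this into `q^(2ε-1) ∫ (1 + t²)^(ε-1) dt`. Bounding the
integrand by `1` on `|t| ≤ 1` and by `|t|^(2ε-2)` beyond gives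
`∫ (1 + t²)^(ε-1) ≤ 2 + 2/(1-2ε)`, which is at most `6` because `ε < 1/4`;
finally `q^(2ε-1) ≤ q^(ε-1)` since `q ≤ 1`.
-/

open MeasureTheory Set

namespace Real

theorem sq_add_sq_rpow_eq_mul (s : ℝ) {q : ℝ} (hq : q ≠ 0) (x : ℝ) :
    (q ^ 2 + x ^ 2) ^ s = (q ^ 2) ^ s * (1 + (x / q) ^ 2) ^ s := by
  rw [← mul_rpow (by positivity) (by positivity)]
  congr 1
  field_simp

theorem integrable_one_add_sq_rpow {s : ℝ} (hs : s < -1 / 2) :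
    Integrable fun x : ℝ => (1 + x ^ 2) ^ s := by
  simpa [mul_div_cancel_left₀] using
    integrable_rpow_neg_one_add_norm_sq (E := ℝ) (μ := volume) (r := -2 * s)
      (by simp; linarith)

theorem integral_one_add_sq_rpow_le {s : ℝ} (hs : s < -1 / 2) :
    ∫ x : ℝ, (1 + x ^ 2) ^ s ≤ 2 * (1 - 1 / (2 * s + 1)) := by
  have hint := integrable_one_add_sq_rpow hs
  have hpow : IntegrableOn (fun x : ℝ => x ^ (2 * s)) (Ioi 1) :=
    integrableOn_Ioi_rpow_of_lt (by linarith) one_pos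
  have near : ∫ x in Ioc (0 : ℝ) 1, (1 + x ^ 2) ^ s ≤ 1 := by
    calc ∫ x in Ioc (0 : ℝ) 1, (1 + x ^ 2) ^ s ≤ ∫ _ in Ioc (0 : ℝ) 1, (1 : ℝ) :=
          setIntegral_mono_on hint.integrableOn (integrableOn_const measure_Ioc_lt_top.ne)
            measurableSet_Ioc fun x _ =>
              rpow_le_one_of_one_le_of_nonpos (by nlinarith) (by linarith)
      _ = 1 := by simp
  have far : ∫ x in Ioi (1 : ℝ), (1 + x ^ 2) ^ s ≤ -1 / (2 * s + 1) := by
    calc ∫ x in Ioi (1 : ℝ), (1 + x ^ 2) ^ s ≤ ∫ x in Ioi (1 : ℝ), x ^ (2 * s) :=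
          setIntegral_mono_on hint.integrableOn hpow measurableSet_Ioi fun x hx => by
            have hx0 : 0 < x := one_pos.trans hx
            rw [rpow_mul hx0.le, rpow_two]
            exact rpow_le_rpow_of_nonpos (by positivity) (by linarith) (by linarith)
      _ = -1 / (2 * s + 1) := by rw [integral_Ioi_rpow_of_lt (by linarith) one_pos, one_rpow]
  have split : ∫ x in Ioi (0 : ℝ), (1 + x ^ 2) ^ s
      = (∫ x in Ioc (0 : ℝ) 1, (1 + x ^ 2) ^ s) + ∫ x in Ioi (1 : ℝ), (1 + x ^ 2) ^ s := by
    rw [← setIntegral_union Ioc_disjoint_Ioi_same measurableSet_Ioi hint.integrableOn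
      hint.integrableOn, Ioc_union_Ioi_eq_Ioi zero_le_one]
  have even : ∫ x : ℝ, (1 + x ^ 2) ^ s = 2 * ∫ x in Ioi (0 : ℝ), (1 + x ^ 2) ^ s := by
    rw [← integral_comp_abs (f := fun x : ℝ => (1 + x ^ 2) ^ s)]
    simp only [sq_abs]
  rw [even, split, sub_eq_add_neg, neg_div']
  linarith

theorem integrable_sq_add_sq_rpow {s q : ℝ} (hs : s < -1 / 2) (hq : q ≠ 0) :
    Integrable fun x : ℝ => (q ^ 2 + x ^ 2) ^ s := by
  simp_rw [sq_add_sq_rpow_eq_mul s hq]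
  exact ((integrable_one_add_sq_rpow hs).comp_div hq).const_mul _

theorem integral_sq_add_sq_rpow {q : ℝ} (s : ℝ) (hq : 0 < q) :
    ∫ x : ℝ, (q ^ 2 + x ^ 2) ^ s = q ^ (2 * s + 1) * ∫ x : ℝ, (1 + x ^ 2) ^ s := by
  simp_rw [sq_add_sq_rpow_eq_mul s hq.ne']
  rw [integral_const_mul, Measure.integral_comp_div (fun x => (1 + x ^ 2) ^ s), abs_of_pos hq,
    smul_eq_mul, ← mul_assoc, ← rpow_natCast, ← rpow_mul hq.le, rpow_add hq, rpow_one]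
  norm_num [mul_comm]

end Real

theorem integral_integral_comp_sub_add_le {f : ℝ → ℝ} (hf : 0 ≤ f) (hfi : Integrable f)
    {p : ℝ} (hp : 0 ≤ p) (r : ℝ) :
    ∫ α in (0 : ℝ)..p, ∫ β in (0 : ℝ)..p, f (α - β + r) ≤ p * ∫ x, f x := by
  have inner (α : ℝ) : ∫ β in (0 : ℝ)..p, f (α - β + r) ≤ ∫ x, f x := by
    simp_rw [sub_add_eq_add_sub α]
    rw [intervalIntegral.integral_comp_sub_left f, sub_zero,
      intervalIntegral.integral_of_le (by linarith)]
    exact setIntegral_le_integral hfi (ae_of_all _ hf)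
  have inner_nonneg (α : ℝ) : 0 ≤ ∫ β in (0 : ℝ)..p, f (α - β + r) :=
    intervalIntegral.integral_nonneg hp fun β _ => hf _
  -- `integral_mono_of_nonneg` needs no integrability of the inner integral in `α`.
  calc ∫ α in (0 : ℝ)..p, ∫ β in (0 : ℝ)..p, f (α - β + r)
      ≤ ∫ _ in (0 : ℝ)..p, ∫ x, f x := by
        rw [intervalIntegral.integral_of_le hp, intervalIntegral.integral_of_le hp]
        exact integral_mono_of_nonneg (ae_of_all _ inner_nonneg) (integrable_const _)
          (ae_of_all _ inner)
    _ = p * ∫ x, f x := by simp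

/-- For all `p, q ∈ (0,1]`, `r ∈ ℝ` and `ε ∈ (0,1/4)`, the double integral
`∫₀^p ∫₀^p (q² + |α - β + r|²)^(ε-1) dα dβ` is at most `6p / q^(1-ε)`. -/
theorem stmt0 (p q r ε : ℝ) (hp : p ∈ Set.Ioc (0:ℝ) 1) (hq : q ∈ Set.Ioc (0:ℝ) 1)
    (hε : ε ∈ Set.Ioo (0:ℝ) (1/4)) :
    (∫ α in (0:ℝ)..p, ∫ β in (0:ℝ)..p, (q ^ 2 + |α - β + r| ^ 2) ^ (ε - 1)) ≤
      6 * p / q ^ (1 - ε) := by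
  obtain ⟨hp0, -⟩ := hp
  obtain ⟨hq0, hq1⟩ := hq
  obtain ⟨hε0, hε1⟩ := hε
  have hs : ε - 1 < -1 / 2 := by linarith
  have hconst : 2 * (1 - 1 / (2 * (ε - 1) + 1)) ≤ 6 := by
    have : -2 ≤ 1 / (2 * (ε - 1) + 1) := by
      rw [le_div_iff_of_neg (by linarith)]
      linarith
    linarith
  simp_rw [sq_abs]
  calc ∫ α in (0 : ℝ)..p, ∫ β in (0 : ℝ)..p, (q ^ 2 + (α - β + r) ^ 2) ^ (ε - 1)
      ≤ p * ∫ x, (q ^ 2 + x ^ 2) ^ (ε - 1) :=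
        integral_integral_comp_sub_add_le (fun x => by positivity)
          (Real.integrable_sq_add_sq_rpow hs hq0.ne') hp0.le r
    _ ≤ p * (q ^ (2 * (ε - 1) + 1) * 6) := by
        rw [Real.integral_sq_add_sq_rpow _ hq0]
        gcongr
        exact (Real.integral_one_add_sq_rpow_le hs).trans hconst
    _ ≤ p * (q ^ (ε - 1) * 6) := by
        gcongr p * (?_ * 6)
        exact Real.rpow_le_rpow_of_exponent_ge hq0 hq1 (by linarith)
    _ = 6 * p / q ^ (1 - ε) := by
        rw [div_eq_mul_inv, ← Real.rpow_neg hq0.le, neg_sub]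
        ring
end

section
/- If A₁ and A₂ are prevalent subsets of a completely metrizable topological vector space X, then A₁ ∩ A₂ is prevalent. -/
open MeasureTheory

/-- A Borel set `A` in a topological vector space `X` is prevalent (as a Borel set) if
there are a Borel measure `μ` and a compact `K` with `0 < μ K < ∞` such that every
translate of `A` has full measure. -/
def IsPrevalentBorel {X : Type*} [AddCommGroup X] [TopologicalSpace X]
    [MeasurableSpace X] (A : Set X) : Prop :=
  MeasurableSet A ∧ ∃ (μ : Measure X) (K : Set X), IsCompact K ∧ 0 < μ K ∧ μ K < ⊤ ∧
    ∀ x : X, μ ((fun a => a + x) '' A)ᶜ = 0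

/-- A set is prevalent if it contains a prevalent Borel set. -/
def IsPrevalent {X : Type*} [AddCommGroup X] [TopologicalSpace X]
    [MeasurableSpace X] (A : Set X) : Prop :=
  ∃ B, B ⊆ A ∧ IsPrevalentBorel B

/-!
If `μ₁` and `μ₂` witness the prevalence of `B₁` and `B₂`, with compact sets `K₁` and `K₂`, then
the convolution of `μ₁|K₁` and `μ₂|K₂` witnesses that of `B₁ ∩ B₂`, with the compact set
`K₁ + K₂`: by Fubini, a translate of `Bᵢᶜ` is null for the convolution because all its translates
are null for the factor `μᵢ|Kᵢ`, and `K₁ + K₂` carries the mass `μ₁ K₁ * μ₂ K₂` of the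
convolution. Metrizability is what makes the compact sets second countable, hence addition
`K₁ × K₂ → X` measurable for the product σ-algebra.
-/

open Set Pointwise TopologicalSpace

theorem forall_measure_compl_image_add_right_eq_zero_iff {X : Type*} [AddGroup X]
    [MeasurableSpace X] {μ : Measure X} {B : Set X} :
    (∀ x, μ ((fun a => a + x) '' B)ᶜ = 0) ↔ ∀ x, ∀ᵐ a ∂μ, a + x ∈ B := by
  rw [neg_surjective.forall]
  simp only [image_add_right, neg_neg, ae_iff]
  rfl

namespace MeasureTheory.Measure

variable {X : Type*} [AddCommGroup X] [MeasurableSpace X]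

/-- The convolution of `μ₁.restrict K₁` and `μ₂.restrict K₂`, computed on `K₁ × K₂` rather than
on `X × X`, whose product σ-algebra may be smaller than the Borel one. -/
noncomputable def convOn (μ₁ : Measure X) (K₁ : Set X) (μ₂ : Measure X) (K₂ : Set X) :
    Measure X :=
  ((μ₁.comap ((↑) : K₁ → X)).prod (μ₂.comap ((↑) : K₂ → X))).map fun p => (p.1 : X) + p.2

variable [TopologicalSpace X] [ContinuousAdd X] [BorelSpace X] [MetrizableSpace X]
  {μ₁ μ₂ : Measure X} {K₁ K₂ : Set X}

theorem measurable_subtype_val_add_subtype_val (hK₂ : IsCompact K₂) :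
    Measurable fun p : K₁ × K₂ => (p.1 : X) + p.2 := by
  have : CompactSpace K₂ := isCompact_iff_compactSpace.mp hK₂
  exact (by fun_prop : Continuous fun p : K₁ × K₂ => (p.1 : X) + p.2).measurable

theorem convOn_comm (hK₁ : IsCompact K₁) [IsFiniteMeasure μ₁] [IsFiniteMeasure μ₂] :
    convOn μ₁ K₁ μ₂ K₂ = convOn μ₂ K₂ μ₁ K₁ := by
  symm
  rw [convOn, convOn, ← prod_swap,
    map_map (measurable_subtype_val_add_subtype_val hK₁) measurable_swap]
  simp only [Function.comp_def, Prod.fst_swap, Prod.snd_swap, add_comm]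

theorem convOn_apply_add (hK₁ : IsCompact K₁) (hK₂ : IsCompact K₂) [IsFiniteMeasure μ₂] :
    convOn μ₁ K₁ μ₂ K₂ (K₁ + K₂) = μ₁ K₁ * μ₂ K₂ := by
  have hpre : (fun p : K₁ × K₂ => (p.1 : X) + p.2) ⁻¹' (K₁ + K₂) = univ :=
    eq_univ_of_forall fun p : K₁ × K₂ => add_mem_add p.1.2 p.2.2
  rw [convOn, map_apply (measurable_subtype_val_add_subtype_val hK₂)
    (hK₁.add hK₂).isClosed.measurableSet, hpre, ← univ_prod_univ, prod_prod,
    comap_subtype_coe_apply hK₁.isClosed.measurableSet,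
    comap_subtype_coe_apply hK₂.isClosed.measurableSet, image_univ, image_univ,
    Subtype.range_coe, Subtype.range_coe]

theorem ae_add_mem_convOn_of_right (hK₂ : IsCompact K₂) [IsFiniteMeasure μ₂] {B : Set X}
    (hB : MeasurableSet B) (h : ∀ x, ∀ᵐ a ∂μ₂, a + x ∈ B) (x : X) :
    ∀ᵐ a ∂convOn μ₁ K₁ μ₂ K₂, a + x ∈ B := by
  have hmeas := measurable_subtype_val_add_subtype_val (K₁ := K₁) hK₂
  rw [convOn, ae_map_iff hmeas.aemeasurable (measurable_add_const x hB),
    ae_prod_iff_ae_ae ((hmeas.add_const x) hB)]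
  refine ae_of_all _ fun k₁ => ?_
  filter_upwards [(ae_restrict_iff_subtype hK₂.isClosed.measurableSet).mp
    (ae_restrict_of_ae (h (k₁ + x)))] with k₂ hk₂
  rwa [add_assoc, add_left_comm]

theorem ae_add_mem_convOn_of_left (hK₁ : IsCompact K₁) [IsFiniteMeasure μ₁]
    [IsFiniteMeasure μ₂] {B : Set X} (hB : MeasurableSet B) (h : ∀ x, ∀ᵐ a ∂μ₁, a + x ∈ B)
    (x : X) : ∀ᵐ a ∂convOn μ₁ K₁ μ₂ K₂, a + x ∈ B := by
  rw [convOn_comm hK₁]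
  exact ae_add_mem_convOn_of_right hK₁ hB h x

end MeasureTheory.Measure

section Prevalence

variable {X : Type*} [AddCommGroup X] [TopologicalSpace X] [ContinuousAdd X]
  [MeasurableSpace X] [BorelSpace X] [MetrizableSpace X] {B₁ B₂ : Set X}

theorem IsPrevalentBorel.inter (h₁ : IsPrevalentBorel B₁) (h₂ : IsPrevalentBorel B₂) :
    IsPrevalentBorel (B₁ ∩ B₂) := by
  obtain ⟨hB₁, μ₁, K₁, hK₁, hμ₁K₁, hμ₁K₁_lt_top, hμ₁⟩ := h₁
  obtain ⟨hB₂, μ₂, K₂, hK₂, hμ₂K₂, hμ₂K₂_lt_top, hμ₂⟩ := h₂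
  have : IsFiniteMeasure (μ₁.restrict K₁) := isFiniteMeasure_restrict.mpr hμ₁K₁_lt_top.ne
  have : IsFiniteMeasure (μ₂.restrict K₂) := isFiniteMeasure_restrict.mpr hμ₂K₂_lt_top.ne
  rw [forall_measure_compl_image_add_right_eq_zero_iff] at hμ₁ hμ₂
  set ν := Measure.convOn (μ₁.restrict K₁) K₁ (μ₂.restrict K₂) K₂
  have hmass : ν (K₁ + K₂) = μ₁ K₁ * μ₂ K₂ := by
    rw [Measure.convOn_apply_add hK₁ hK₂, Measure.restrict_apply_self,
      Measure.restrict_apply_self]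
  refine ⟨hB₁.inter hB₂, ν, K₁ + K₂, hK₁.add hK₂, ?_, ?_, ?_⟩
  · rw [hmass]
    exact ENNReal.mul_pos hμ₁K₁.ne' hμ₂K₂.ne'
  · rw [hmass]
    exact ENNReal.mul_lt_top hμ₁K₁_lt_top hμ₂K₂_lt_top
  · rw [forall_measure_compl_image_add_right_eq_zero_iff]
    intro x
    filter_upwards
      [Measure.ae_add_mem_convOn_of_left hK₁ hB₁ (fun y => ae_restrict_of_ae (hμ₁ y)) x,
        Measure.ae_add_mem_convOn_of_right hK₂ hB₂ (fun y => ae_restrict_of_ae (hμ₂ y)) x]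
      with a ha₁ ha₂ using ⟨ha₁, ha₂⟩

theorem IsPrevalent.inter {A₁ A₂ : Set X} (h₁ : IsPrevalent A₁) (h₂ : IsPrevalent A₂) :
    IsPrevalent (A₁ ∩ A₂) := by
  obtain ⟨B₁, hB₁A₁, hB₁⟩ := h₁
  obtain ⟨B₂, hB₂A₂, hB₂⟩ := h₂
  exact ⟨B₁ ∩ B₂, inter_subset_inter hB₁A₁ hB₂A₂, hB₁.inter hB₂⟩

end Prevalence

theorem stmt14_general (X : Type*) [AddCommGroup X] [TopologicalSpace X]
    [IsTopologicalAddGroup X] [MeasurableSpace X] [BorelSpace X]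
    (hmetr : ∃ m : MetricSpace X,
      m.toUniformSpace.toTopologicalSpace = ‹TopologicalSpace X› ∧
        @CompleteSpace X m.toUniformSpace)
    (A₁ A₂ : Set X) (h₁ : IsPrevalent A₁) (h₂ : IsPrevalent A₂) :
    IsPrevalent (A₁ ∩ A₂) := by
  obtain ⟨m, hm, -⟩ := hmetr
  have : MetrizableSpace X := by subst hm; infer_instance
  exact h₁.inter h₂

/-- In a completely metrizable topological vector space, the intersection of two
prevalent sets is prevalent. -/
theorem stmt14 (X : Type*) [AddCommGroup X] [Module ℝ X] [TopologicalSpace X]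
    [IsTopologicalAddGroup X] [ContinuousSMul ℝ X] [MeasurableSpace X] [BorelSpace X]
    (hmetr : ∃ m : MetricSpace X,
      m.toUniformSpace.toTopologicalSpace = ‹TopologicalSpace X› ∧
        @CompleteSpace X m.toUniformSpace)
    (A₁ A₂ : Set X) (h₁ : IsPrevalent A₁) (h₂ : IsPrevalent A₂) :
    IsPrevalent (A₁ ∩ A₂) :=
  stmt14_general X hmetr A₁ A₂ h₁ h₂
end
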